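/- arXiv:2204.13964 — 2 statements merged into one kernel-verified Lean document; each statement's English description precedes it below -/
import Mathlib

section
/- Let X be a Banach space, I a non-empty set, and (T_i)_{i ∈ I} a uniformly norm-bounded family of bounded linear operators on X. Let T̂ be the induced multiplication operator on ℓ^∞(I; X). If T̂ is bijective (hence has a bounded inverse by the open mapping theorem), then each T_i is bijective and ‖T_i^{-1}‖ ≤ ‖T̂^{-1}‖ for every i ∈ I; in particular sup_{i ∈ I} ‖T_i^{-1}‖ < ∞. -/
/-!
Evaluation at `i` and the embedding of `X` as the `i`-th coordinate, `P` and `J`, have norm at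
most `1`, satisfy `P J = 1`, and intertwine the diagonal operator with its entry:
`P T̂ = Tᵢ P` and `T̂ J = J Tᵢ`. Hence `P T̂⁻¹ J` is a two-sided inverse of `Tᵢ`, of norm at most
`‖T̂⁻¹‖`. The inverse `T̂⁻¹` is bounded by the open mapping theorem, as `ℓ^∞(I; X)` is complete.
-/
open scoped ENNReal

section Intertwining

variable {R E F : Type*} [Semiring R] [TopologicalSpace E] [AddCommMonoid E] [Module R E]
  [TopologicalSpace F] [AddCommMonoid F] [Module R F]

theorem ContinuousLinearMap.isUnit_and_ringInverse_eq_of_intertwining {P : F →L[R] E} {J : E →L[R] F}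
    {t : E →L[R] E} {U : F →L[R] F} (hPJ : P ∘L J = .id R E) (hP : P ∘L U = t ∘L P)
    (hJ : U ∘L J = J ∘L t) (hU : IsUnit U) :
    IsUnit t ∧ Ring.inverse t = P ∘L Ring.inverse U ∘L J := by
  have hUS (y : F) : U (Ring.inverse U y) = y := congr($(Ring.mul_inverse_cancel U hU) y)
  have hSU (y : F) : Ring.inverse U (U y) = y := congr($(Ring.inverse_mul_cancel U hU) y)
  have hPJx (x : E) : P (J x) = x := congr($hPJ x)
  let u : (E →L[R] E)ˣ :=
    { val := t
      inv := P ∘L Ring.inverse U ∘L J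
      val_inv := ContinuousLinearMap.ext fun x => by
        change t (P (Ring.inverse U (J x))) = x
        rw [← ContinuousLinearMap.comp_apply t P, ← hP, ContinuousLinearMap.comp_apply, hUS, hPJx]
      inv_val := ContinuousLinearMap.ext fun x => by
        change P (Ring.inverse U (J (t x))) = x
        rw [← ContinuousLinearMap.comp_apply J t, ← hJ, ContinuousLinearMap.comp_apply, hSU, hPJx] }
  exact ⟨u.isUnit, Ring.inverse_unit u⟩

end Intertwining

namespace lp

variable {𝕜 I : Type*} [NontriviallyNormedField 𝕜] {E : I → Type*}
  [∀ i, NormedAddCommGroup (E i)] [∀ i, NormedSpace 𝕜 (E i)] {p : ℝ≥0∞} [Fact (1 ≤ p)]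

theorem norm_evalCLM_le (i : I) : ‖evalCLM 𝕜 E p i‖ ≤ 1 :=
  LinearMap.mkContinuous_norm_le _ zero_le_one _

theorem norm_singleContinuousLinearMap_le [DecidableEq I] (i : I) :
    ‖singleContinuousLinearMap 𝕜 E p i‖ ≤ 1 :=
  ContinuousLinearMap.opNorm_le_bound _ zero_le_one fun x => by
    rw [singleContinuousLinearMap_apply, lp.norm_single (zero_lt_one.trans_le Fact.out), one_mul]

variable {T : ∀ i, E i →L[𝕜] E i} {U : lp E p →L[𝕜] lp E p}

theorem evalCLM_comp_of_apply (hU : ∀ f i, U f i = T i (f i)) (i : I) :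
    evalCLM 𝕜 E p i ∘L U = T i ∘L evalCLM 𝕜 E p i :=
  ContinuousLinearMap.ext fun f => hU f i

theorem comp_singleContinuousLinearMap_of_apply [DecidableEq I] (hU : ∀ f i, U f i = T i (f i))
    (i : I) :
    U ∘L singleContinuousLinearMap 𝕜 E p i = singleContinuousLinearMap 𝕜 E p i ∘L T i := by
  ext x j
  simp only [ContinuousLinearMap.comp_apply, singleContinuousLinearMap_apply, hU, lp.coeFn_single]
  exact Pi.apply_single (fun j => T j) (fun j => map_zero _) i x j

theorem isUnit_and_norm_ringInverse_le_of_apply (hU : ∀ f i, U f i = T i (f i))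
    (hUunit : IsUnit U) (i : I) :
    IsUnit (T i) ∧ ‖Ring.inverse (T i)‖ ≤ ‖Ring.inverse U‖ := by
  classical
  have hPJ : evalCLM 𝕜 E p i ∘L singleContinuousLinearMap 𝕜 E p i = .id 𝕜 (E i) :=
    ContinuousLinearMap.ext fun x => lp.single_apply_self p i x
  obtain ⟨hunit, hinv⟩ := ContinuousLinearMap.isUnit_and_ringInverse_eq_of_intertwining hPJ
    (evalCLM_comp_of_apply hU i) (comp_singleContinuousLinearMap_of_apply hU i) hUunit
  refine ⟨hunit, ?_⟩
  calc ‖Ring.inverse (T i)‖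
      ≤ ‖evalCLM 𝕜 E p i‖ * (‖Ring.inverse U‖ * ‖singleContinuousLinearMap 𝕜 E p i‖) := by
        rw [hinv]
        exact (ContinuousLinearMap.opNorm_comp_le _ _).trans
          (mul_le_mul_of_nonneg_left (ContinuousLinearMap.opNorm_comp_le _ _) (norm_nonneg _))
    _ ≤ 1 * (‖Ring.inverse U‖ * 1) := by
        gcongr
        · exact norm_evalCLM_le i
        · exact norm_singleContinuousLinearMap_le i
    _ = ‖Ring.inverse U‖ := by ring

end lp

theorem stmt2_general {𝕜 X I : Type*} [RCLike 𝕜] [NormedAddCommGroup X] [NormedSpace 𝕜 X]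
    [CompleteSpace X] (T : I → X →L[𝕜] X)
    (That : lp (fun _ : I => X) ∞ →L[𝕜] lp (fun _ : I => X) ∞)
    (hThat : ∀ (f : lp (fun _ : I => X) ∞) (i : I), That f i = T i (f i))
    (hbij : Function.Bijective That) :
    (∀ i : I, Function.Bijective (T i) ∧ ‖Ring.inverse (T i)‖ ≤ ‖Ring.inverse That‖) ∧
      BddAbove (Set.range fun i => ‖Ring.inverse (T i)‖) := by
  have hcomp (i : I) := lp.isUnit_and_norm_ringInverse_le_of_apply hThat
    (ContinuousLinearMap.isUnit_iff_bijective.mpr hbij) i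
  refine ⟨fun i => ⟨ContinuousLinearMap.isUnit_iff_bijective.mp (hcomp i).1, (hcomp i).2⟩, ?_⟩
  exact ⟨‖Ring.inverse That‖, Set.forall_mem_range.mpr fun i => (hcomp i).2⟩

/-- If the multiplication operator `T̂` on `ℓ^∞(I; X)` is bijective (hence
boundedly invertible), then each `T i` is bijective with `‖(T i)⁻¹‖ ≤ ‖T̂⁻¹‖`; in
particular the family of inverses is uniformly norm-bounded. -/
theorem stmt2 {𝕜 X I : Type*} [RCLike 𝕜] [NormedAddCommGroup X] [NormedSpace 𝕜 X]
    [CompleteSpace X] [Nonempty I] (T : I → X →L[𝕜] X)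
    (hT : BddAbove (Set.range fun i => ‖T i‖))
    (That : lp (fun _ : I => X) ∞ →L[𝕜] lp (fun _ : I => X) ∞)
    (hThat : ∀ (f : lp (fun _ : I => X) ∞) (i : I), That f i = T i (f i))
    (hbij : Function.Bijective That) :
    (∀ i : I, Function.Bijective (T i) ∧ ‖Ring.inverse (T i)‖ ≤ ‖Ring.inverse That‖) ∧
      BddAbove (Set.range fun i => ‖Ring.inverse (T i)‖) :=
  stmt2_general T That hThat hbij
end

section
/- Let X be a Banach space, I a non-empty set, and (T_i)_{i ∈ I} a uniformly norm-bounded family of bounded linear operators on X, with induced multiplication operator T̂ on ℓ^∞(I; X). For a scalar λ, λ lies in the resolvent set of T̂ if and only if λ lies in the resolvent set of every T_i and sup_{i ∈ I} ‖(λ − T_i)^{-1}‖ < ∞. -/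
open scoped ENNReal

/-- For the multiplication operator `T̂` on `ℓ^∞(I; X)` induced by a uniformly
norm-bounded family `(T i)` on a complex Banach space `X`, a scalar `λ` belongs to the
resolvent set of `T̂` iff it belongs to the resolvent set of every `T i` with uniformly
bounded resolvents. -/
theorem stmt4 {X I : Type*} [NormedAddCommGroup X] [NormedSpace ℂ X]
    [CompleteSpace X] [Nonempty I] (T : I → X →L[ℂ] X)
    (hT : BddAbove (Set.range fun i => ‖T i‖))
    (That : lp (fun _ : I => X) ∞ →L[ℂ] lp (fun _ : I => X) ∞)
    (hThat : ∀ (f : lp (fun _ : I => X) ∞) (i : I), That f i = T i (f i))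
    (lam : ℂ) :
    lam ∈ resolventSet ℂ That ↔
      (∀ i : I, lam ∈ resolventSet ℂ (T i)) ∧
        BddAbove (Set.range fun i => ‖resolvent (T i) lam‖) := by
  classical
  set A : lp (fun _ : I => X) ∞ →L[ℂ] lp (fun _ : I => X) ∞ :=
    algebraMap ℂ _ lam - That with hA
  have hAi : ∀ (f : lp (fun _ : I => X) ∞) (i : I),
      A f i = (algebraMap ℂ (X →L[ℂ] X) lam - T i) (f i) := by
    intro f i
    have : A f = lam • f - That f := by
      rw [hA]
      simp [Algebra.algebraMap_eq_smul_one]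
    rw [this, lp.coeFn_sub]
    simp only [Pi.sub_apply, ContinuousLinearMap.sub_apply, hThat,
      Algebra.algebraMap_eq_smul_one, ContinuousLinearMap.smul_apply,
      ContinuousLinearMap.one_apply]
    rw [lp.coeFn_smul]
    simp
  have hsingle_norm : ∀ (i : I) (x : X), ‖(lp.single (E := fun _ : I => X) ∞ i x)‖ ≤ ‖x‖ := by
    intro i x
    refine lp.norm_le_of_forall_le (norm_nonneg x) fun j => ?_
    rcases eq_or_ne j i with rfl | hj
    · rw [lp.single_apply_self]
    · rw [lp.single_apply_ne _ _ _ hj]; simpa using norm_nonneg x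
  constructor
  · -- forward direction
    intro hlam
    rw [spectrum.mem_resolventSet_iff] at hlam
    obtain ⟨u, hu⟩ := hlam
    set R : lp (fun _ : I => X) ∞ →L[ℂ] lp (fun _ : I => X) ∞ := ((u⁻¹ : (lp (fun _ : I => X) ∞ →L[ℂ] lp (fun _ : I => X) ∞)ˣ) : lp (fun _ : I => X) ∞ →L[ℂ] lp (fun _ : I => X) ∞) with hR
    have hRA : ∀ z, R (A z) = z := by
      intro z
      rw [hR, hA, ← hu, ← ContinuousLinearMap.mul_apply, u.inv_mul,
        ContinuousLinearMap.one_apply]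
    have hAR : ∀ z, A (R z) = z := by
      intro z
      rw [hR, hA, ← hu, ← ContinuousLinearMap.mul_apply, u.mul_inv,
        ContinuousLinearMap.one_apply]
    have hAinj : Function.Injective A := fun f g h => by
      rw [← hRA f, ← hRA g, h]
    -- for each i, the map algebraMap lam - T i is bijective
    have key : ∀ i : I, Function.Bijective (algebraMap ℂ (X →L[ℂ] X) lam - T i) := by
      intro i
      constructor
      · intro x y hxy
        have h1 : A (lp.single (E := fun _ : I => X) ∞ i x) =
            A (lp.single (E := fun _ : I => X) ∞ i y) := by
          apply lp.ext
          funext j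
          rcases eq_or_ne j i with rfl | hj
          · rw [hAi, hAi, lp.single_apply_self, lp.single_apply_self, hxy]
          · rw [hAi, hAi, lp.single_apply_ne _ _ _ hj, lp.single_apply_ne _ _ _ hj]
        have h2 := hAinj h1
        have h3 := congrArg (fun g : lp (fun _ : I => X) ∞ => (g : ∀ _ : I, X) i) h2
        simpa [lp.single_apply_self] using h3
      · intro y
        set g : lp (fun _ : I => X) ∞ := lp.single (E := fun _ : I => X) ∞ i y with hg
        refine ⟨R g i, ?_⟩
        have h3 := congrArg (fun h : lp (fun _ : I => X) ∞ => (h : ∀ _ : I, X) i) (hAR g)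
        simpa [hAi, hg, lp.single_apply_self] using h3
    have hres : ∀ i : I, lam ∈ resolventSet ℂ (T i) := fun i =>
      spectrum.mem_resolventSet_iff.mpr (ContinuousLinearMap.isUnit_iff_bijective.mpr (key i))
    refine ⟨hres, ?_⟩
    -- uniform bound on resolvents
    refine ⟨‖R‖, ?_⟩
    rintro r ⟨i, rfl⟩
    refine ContinuousLinearMap.opNorm_le_bound _ (norm_nonneg _) fun y => ?_
    set g : lp (fun _ : I => X) ∞ := lp.single (E := fun _ : I => X) ∞ i y with hg
    have hfi : (algebraMap ℂ (X →L[ℂ] X) lam - T i) (R g i) = y := by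
      have h3 := congrArg (fun h : lp (fun _ : I => X) ∞ => (h : ∀ _ : I, X) i) (hAR g)
      simpa [hAi, hg, lp.single_apply_self] using h3
    have hru : IsUnit (algebraMap ℂ (X →L[ℂ] X) lam - T i) :=
      ContinuousLinearMap.isUnit_iff_bijective.mpr (key i)
    have hres_eq : resolvent (T i) lam y = R g i := by
      apply (key i).1
      rw [hfi]
      have h1 : (algebraMap ℂ (X →L[ℂ] X) lam - T i) (resolvent (T i) lam y) =
          (((algebraMap ℂ (X →L[ℂ] X) lam - T i) * resolvent (T i) lam)) y := rfl
      rw [h1, resolvent, Ring.mul_inverse_cancel _ hru, ContinuousLinearMap.one_apply]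
    rw [hres_eq]
    calc ‖R g i‖ ≤ ‖R g‖ := lp.norm_apply_le_norm ENNReal.top_ne_zero (R g) i
      _ ≤ ‖R‖ * ‖g‖ := ContinuousLinearMap.le_opNorm _ g
      _ ≤ ‖R‖ * ‖y‖ := by
          have := hsingle_norm i y
          exact mul_le_mul_of_nonneg_left (by rw [hg]; exact this) (norm_nonneg R)
  · -- reverse direction
    rintro ⟨hres, C, hC⟩
    have hC' : ∀ i, ‖resolvent (T i) lam‖ ≤ C := fun i => hC ⟨i, rfl⟩
    have hC0 : 0 ≤ C := le_trans (norm_nonneg _) (hC' (Classical.arbitrary I))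
    have hunit : ∀ i, IsUnit (algebraMap ℂ (X →L[ℂ] X) lam - T i) := fun i =>
      spectrum.mem_resolventSet_iff.mp (hres i)
    -- build the diagonal resolvent operator
    have hmem : ∀ f : lp (fun _ : I => X) ∞,
        Memℓp (fun i => resolvent (T i) lam (f i)) ∞ := by
      intro f
      apply memℓp_infty
      refine ⟨C * ‖f‖, ?_⟩
      rintro r ⟨i, rfl⟩
      calc ‖resolvent (T i) lam (f i)‖ ≤ ‖resolvent (T i) lam‖ * ‖f i‖ :=
            ContinuousLinearMap.le_opNorm _ _
        _ ≤ C * ‖f‖ := mul_le_mul (hC' i)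
            (lp.norm_apply_le_norm ENNReal.top_ne_zero f i) (norm_nonneg _) hC0
    set S₀ : lp (fun _ : I => X) ∞ →ₗ[ℂ] lp (fun _ : I => X) ∞ :=
      { toFun := fun f => ⟨fun i => resolvent (T i) lam (f i), hmem f⟩
        map_add' := by
          intro f g
          apply lp.ext
          funext i
          simp only [lp.coeFn_add, Pi.add_apply]
          exact map_add _ _ _
        map_smul' := by
          intro c f
          apply lp.ext
          funext i
          simp only [lp.coeFn_smul, Pi.smul_apply, RingHom.id_apply]
          exact map_smul _ _ _ } with hS₀
    have hS₀app : ∀ (f : lp (fun _ : I => X) ∞) (i : I),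
        (S₀ f : ∀ _ : I, X) i = resolvent (T i) lam (f i) := fun f i => rfl
    have hS₀bound : ∀ f : lp (fun _ : I => X) ∞, ‖S₀ f‖ ≤ C * ‖f‖ := by
      intro f
      refine lp.norm_le_of_forall_le (mul_nonneg hC0 (norm_nonneg f)) fun i => ?_
      rw [hS₀app]
      calc ‖resolvent (T i) lam (f i)‖ ≤ ‖resolvent (T i) lam‖ * ‖f i‖ :=
            ContinuousLinearMap.le_opNorm _ _
        _ ≤ C * ‖f‖ := mul_le_mul (hC' i)
            (lp.norm_apply_le_norm ENNReal.top_ne_zero f i) (norm_nonneg _) hC0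
    set S : lp (fun _ : I => X) ∞ →L[ℂ] lp (fun _ : I => X) ∞ :=
      S₀.mkContinuous C hS₀bound with hS
    have hSapp : ∀ (f : lp (fun _ : I => X) ∞) (i : I),
        (S f : ∀ _ : I, X) i = resolvent (T i) lam (f i) := fun f i => rfl
    rw [spectrum.mem_resolventSet_iff]
    refine ⟨⟨A, S, ?_, ?_⟩, hA.symm⟩
    · refine ContinuousLinearMap.ext fun f => lp.ext (funext fun i => ?_)
      have h1 : (A * S) f = A (S f) := rfl
      rw [h1, hAi, hSapp]
      have h2 : (algebraMap ℂ (X →L[ℂ] X) lam - T i) (resolvent (T i) lam (f i)) =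
          (((algebraMap ℂ (X →L[ℂ] X) lam - T i) * resolvent (T i) lam)) (f i) := rfl
      rw [h2, resolvent, Ring.mul_inverse_cancel _ (hunit i)]
      rfl
    · refine ContinuousLinearMap.ext fun f => lp.ext (funext fun i => ?_)
      have h1 : (S * A) f = S (A f) := rfl
      rw [h1, hSapp, hAi]
      have h2 : resolvent (T i) lam ((algebraMap ℂ (X →L[ℂ] X) lam - T i) (f i)) =
          ((resolvent (T i) lam * (algebraMap ℂ (X →L[ℂ] X) lam - T i))) (f i) := rfl
      rw [h2, resolvent, Ring.inverse_mul_cancel _ (hunit i)]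
      rfl
end
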